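/- arXiv:math/0411375 — 2 statements merged into one kernel-verified Lean document; each statement's English description precedes it below -/
import Mathlib

section
/- Let m ≥ 1 be an integer. (i) If A₁, A₂ ∈ SL(2,ℝ) and δ₁, δ₂ : ℍ → ℂ are holomorphic with δᵢ(z)^m · (denom Aᵢ z)² = 1 for all z ∈ ℍ (i = 1,2), then the function z ↦ δ₂(A₁ • z) · δ₁(z) is holomorphic and satisfies (δ₂(A₁ • z) · δ₁(z))^m · (denom (A₂ * A₁) z)² = 1 for all z ∈ ℍ. (ii) If A ∈ SL(2,ℝ) and δ : ℍ → ℂ is holomorphic with δ(z)^m · (denom A z)² = 1 for all z, then the function z ↦ (δ(A⁻¹ • z))⁻¹ is holomorphic and satisfies ((δ(A⁻¹ • z))⁻¹)^m · (denom A⁻¹ z)² = 1 for all z. Consequently the set of such pairs (A, δ) is a group under the multiplication (A₂, δ₂)·(A₁, δ₁) = (A₂A₁, (δ₂ ∘ (A₁ • ·)) · δ₁), with identity (1, const 1). (Proposition 2.2.) -/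
open scoped MatrixGroups Manifold UpperHalfPlane

/-- The Möbius cocycle `denom A z = c z + d` for `A = [[a,b],[c,d]] ∈ SL(2,ℝ)` and `z ∈ ℍ`. -/
noncomputable def mdenom (A : Matrix.SpecialLinearGroup (Fin 2) ℝ) (z : ℍ) : ℂ :=
  ((A 1 0 : ℝ) : ℂ) * (z : ℂ) + ((A 1 1 : ℝ) : ℂ)

/-- `δ : ℍ → ℂ` is holomorphic. -/
def Holo (δ : ℍ → ℂ) : Prop := MDifferentiable 𝓘(ℂ) 𝓘(ℂ) δ

/-- The cocycle condition `δ(z)^m · (denom A z)² = 1` for all `z ∈ ℍ`. -/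
def Cocycle (m : ℕ) (A : Matrix.SpecialLinearGroup (Fin 2) ℝ) (δ : ℍ → ℂ) : Prop :=
  ∀ z : ℍ, δ z ^ m * (mdenom A z) ^ 2 = 1

/-- The set of pairs `(A, δ)` with `δ` holomorphic and `δ(z)^m · (denom A z)² = 1`:
the paper's model of the `m`-fold covering group `G_m` of `PSL(2,ℝ)`. -/
def SpinPair (m : ℕ) : Type :=
  {p : Matrix.SpecialLinearGroup (Fin 2) ℝ × (ℍ → ℂ) // Holo p.2 ∧ Cocycle m p.1 p.2}

/-- The multiplication of a group structure `G` on `X`. -/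
def mulOf {X : Type*} (G : Group X) (x y : X) : X := letI := G; x * y

/-- The identity element of a group structure `G` on `X`. -/
def oneOf {X : Type*} (G : Group X) : X := letI := G; 1

/-! The cocycle identity `denom (A * B) z = denom A (B • z) * denom B z` turns the defining
relation of `(A₂, δ₂)·(A₁, δ₁)` into the product of the relations for the two factors, and
taking `B = A⁻¹` gives `denom A⁻¹ z = (denom A (A⁻¹ • z))⁻¹`, which handles inverses. For
`m ≠ 0` the relation forces `δ` to vanish nowhere, so `1 / (δ ∘ (A⁻¹ • ·))` is again
holomorphic; the group axioms then reduce to `mul_smul` for the action on `ℍ`. -/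

open UpperHalfPlane

section Cocycle

variable {m : ℕ} {A B : SL(2,ℝ)} {δ δ₁ δ₂ : ℍ → ℂ}

lemma mdenom_ne_zero (A : SL(2,ℝ)) (z : ℍ) : mdenom A z ≠ 0 :=
  denom_ne_zero (Matrix.SpecialLinearGroup.mapGL ℝ A) z

lemma coe_smul_eq_div_mdenom (A : SL(2,ℝ)) (z : ℍ) :
    ((A • z : ℍ) : ℂ) = (((A 0 0 : ℝ) : ℂ) * z + ((A 0 1 : ℝ) : ℂ)) / mdenom A z := by
  simp [coe_specialLinearGroup_apply, mdenom]

lemma mdenom_mul (A B : SL(2,ℝ)) (z : ℍ) :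
    mdenom (A * B) z = mdenom A (B • z) * mdenom B z := by
  rw [mdenom, mdenom, coe_smul_eq_div_mdenom, add_mul, mul_assoc,
    div_mul_cancel₀ _ (mdenom_ne_zero B z)]
  simp [mdenom, Matrix.mul_apply, Fin.sum_univ_two]
  ring

lemma mdenom_one (z : ℍ) : mdenom 1 z = 1 := by
  simp [mdenom]

lemma mdenom_inv (A : SL(2,ℝ)) (z : ℍ) : mdenom A⁻¹ z = (mdenom A (A⁻¹ • z))⁻¹ :=
  eq_inv_of_mul_eq_one_right (by rw [← mdenom_mul, mul_inv_cancel, mdenom_one])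

lemma Cocycle.ne_zero (hm : m ≠ 0) (h : Cocycle m A δ) (z : ℍ) : δ z ≠ 0 := by
  intro hz
  simpa [hz, hm] using h z

lemma Cocycle.one : Cocycle m 1 (fun _ => 1) := by
  simp [Cocycle, mdenom_one]

lemma Cocycle.mul (h₁ : Cocycle m A δ₁) (h₂ : Cocycle m B δ₂) :
    Cocycle m (B * A) (fun z => δ₂ (A • z) * δ₁ z) := by
  intro z
  calc (δ₂ (A • z) * δ₁ z) ^ m * mdenom (B * A) z ^ 2
      = (δ₂ (A • z) ^ m * mdenom B (A • z) ^ 2) * (δ₁ z ^ m * mdenom A z ^ 2) := by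
        rw [mdenom_mul]; ring
    _ = 1 := by rw [h₂, h₁, one_mul]

lemma Cocycle.inv (h : Cocycle m A δ) : Cocycle m A⁻¹ (fun z => (δ (A⁻¹ • z))⁻¹) := by
  intro z
  rw [mdenom_inv, inv_pow, inv_pow, ← mul_inv, h, inv_one]

end Cocycle

section Holo

variable {δ δ₁ δ₂ : ℍ → ℂ}

lemma mdifferentiable_specialLinearGroup_smul (A : SL(2,ℝ)) :
    MDifferentiable 𝓘(ℂ) 𝓘(ℂ) (fun z : ℍ => A • z) :=
  mdifferentiable_smul (g := Matrix.SpecialLinearGroup.mapGL ℝ A) (by simp)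

lemma Holo.comp_smul (h : Holo δ) (A : SL(2,ℝ)) : Holo (fun z => δ (A • z)) :=
  fun z => (h _).comp z (mdifferentiable_specialLinearGroup_smul A z)

lemma Holo.comp_smul_mul (h₁ : Holo δ₁) (h₂ : Holo δ₂) (A : SL(2,ℝ)) :
    Holo (fun z => δ₂ (A • z) * δ₁ z) :=
  MDifferentiable.mul (h₂.comp_smul A) h₁

lemma Holo.inv_comp_smul {m : ℕ} (hm : m ≠ 0) {A : SL(2,ℝ)} (h : Holo δ)
    (hc : Cocycle m A δ) : Holo (fun z => (δ (A⁻¹ • z))⁻¹) :=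
  MDifferentiable.inv (h.comp_smul A⁻¹) fun z => hc.ne_zero hm (A⁻¹ • z)

end Holo

namespace SpinPair

variable {m : ℕ}

lemma ext {x y : SpinPair m} (h₁ : x.val.1 = y.val.1) (h₂ : ∀ z, x.val.2 z = y.val.2 z) :
    x = y :=
  Subtype.ext (Prod.ext h₁ (funext h₂))

noncomputable abbrev group (hm : m ≠ 0) : Group (SpinPair m) where
  mul x y := ⟨(x.val.1 * y.val.1, fun z => x.val.2 (y.val.1 • z) * y.val.2 z),
    y.prop.1.comp_smul_mul x.prop.1 _, y.prop.2.mul x.prop.2⟩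
  one := ⟨(1, fun _ => 1), fun _ => mdifferentiableAt_const, Cocycle.one⟩
  inv x := ⟨(x.val.1⁻¹, fun z => (x.val.2 (x.val.1⁻¹ • z))⁻¹),
    x.prop.1.inv_comp_smul hm x.prop.2, x.prop.2.inv⟩
  mul_assoc x y w := SpinPair.ext (mul_assoc _ _ _) fun z => by
    change x.val.2 (y.val.1 • w.val.1 • z) * y.val.2 (w.val.1 • z) * w.val.2 z
      = x.val.2 ((y.val.1 * w.val.1) • z) * (y.val.2 (w.val.1 • z) * w.val.2 z)
    rw [mul_smul, mul_assoc]
  one_mul x := SpinPair.ext (one_mul _) fun z => one_mul (x.val.2 z)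
  mul_one x := SpinPair.ext (mul_one _) fun z => by
    change x.val.2 ((1 : SL(2,ℝ)) • z) * 1 = x.val.2 z
    rw [one_smul, mul_one]
  inv_mul_cancel x := SpinPair.ext (inv_mul_cancel _) fun z => by
    change (x.val.2 (x.val.1⁻¹ • x.val.1 • z))⁻¹ * x.val.2 z = 1
    rw [inv_smul_smul, inv_mul_cancel₀ (x.prop.2.ne_zero hm z)]

end SpinPair

/-- (i) closure of the cocycle pairs under multiplication, (ii) closure under inversion, and
consequently the set of such pairs is a group with the multiplication
`(A₂, δ₂)·(A₁, δ₁) = (A₂A₁, (δ₂ ∘ (A₁ • ·)) · δ₁)` and identity `(1, const 1)`. -/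
theorem covering_group_structure (m : ℕ) (hm : 1 ≤ m) :
    (∀ (A₁ A₂ : Matrix.SpecialLinearGroup (Fin 2) ℝ) (δ₁ δ₂ : ℍ → ℂ),
        Holo δ₁ → Holo δ₂ → Cocycle m A₁ δ₁ → Cocycle m A₂ δ₂ →
        Holo (fun z => δ₂ (A₁ • z) * δ₁ z) ∧
          Cocycle m (A₂ * A₁) (fun z => δ₂ (A₁ • z) * δ₁ z)) ∧
    (∀ (A : Matrix.SpecialLinearGroup (Fin 2) ℝ) (δ : ℍ → ℂ),
        Holo δ → Cocycle m A δ →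
        Holo (fun z => (δ (A⁻¹ • z))⁻¹) ∧ Cocycle m A⁻¹ (fun z => (δ (A⁻¹ • z))⁻¹)) ∧
    (∃ G : Group (SpinPair m),
      (∀ x y : SpinPair m,
        (mulOf G x y).val
          = (x.val.1 * y.val.1, fun z => x.val.2 (y.val.1 • z) * y.val.2 z)) ∧
      (oneOf G).val = ((1 : Matrix.SpecialLinearGroup (Fin 2) ℝ), fun _ => (1 : ℂ))) := by
  have hm₀ : m ≠ 0 := Nat.one_le_iff_ne_zero.mp hm
  refine ⟨fun A₁ A₂ δ₁ δ₂ h₁ h₂ hc₁ hc₂ => ⟨h₁.comp_smul_mul h₂ A₁, hc₁.mul hc₂⟩,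
    fun A δ hδ hc => ⟨hδ.inv_comp_smul hm₀ hc, hc.inv⟩, ⟨SpinPair.group hm₀, fun _ _ => rfl, rfl⟩⟩
end

section
/- Let m ≥ 1, Z = ZMod m, k ∈ ℕ and γ : Fin k → Z. For every pair (α, β) ∈ Z × Z there exist a permutation σ in the subgroup of Equiv.Perm (Z × Z) generated by {e₁, e₂, n, r} ∪ {f_{γ i} : i ∈ Fin k} and an element d ∈ Z such that σ (α, β) = (d, 0) and the additive subgroup of Z generated by {d} equals the additive subgroup of Z generated by {α, β} ∪ {γ i + 1 : i ∈ Fin k}. (This is the algebraic core of Lemma 5.5: any tuple (σ(a₁), σ(b₁)) can be transformed by Dehn twists into (δ, 0), where δ = gcd(m, σ(a₁), σ(b₁), σ(c₂)+1, …, σ(cₙ)+1).) -/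
/-! The twists `r ∘ e₁^(-q)` send `(a, b)` to `(-b, a - q b)`, so Euclid's algorithm run on
integer lifts brings `(α, β)` to some `(d, 0)` with `⟨d⟩ = ⟨α, β⟩`. For a parameter `c`, `f_c ∘ r`
sends `(d, 0)` to `(-d, -(c + 1))`, and running Euclid again absorbs `c + 1` into the generator;
this is done once for each value of `γ`. -/

/-- Dehn twist action `e₁(α, β) = (α+β, β)`. -/
def e1 (m : ℕ) : Equiv.Perm (ZMod m × ZMod m) where
  toFun p := (p.1 + p.2, p.2)
  invFun p := (p.1 - p.2, p.2)
  left_inv := by rintro ⟨a, b⟩; simp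
  right_inv := by rintro ⟨a, b⟩; simp

/-- Dehn twist action `e₂(α, β) = (α, β+α)`. -/
def e2 (m : ℕ) : Equiv.Perm (ZMod m × ZMod m) where
  toFun p := (p.1, p.2 + p.1)
  invFun p := (p.1, p.2 - p.1)
  left_inv := by rintro ⟨a, b⟩; simp
  right_inv := by rintro ⟨a, b⟩; simp

/-- Dehn twist action `n(α, β) = (−α, −β)`. -/
def nn (m : ℕ) : Equiv.Perm (ZMod m × ZMod m) where
  toFun p := (-p.1, -p.2)
  invFun p := (-p.1, -p.2)
  left_inv := by rintro ⟨a, b⟩; simp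
  right_inv := by rintro ⟨a, b⟩; simp

/-- Dehn twist action `r(α, β) = (−β, α)`. -/
def rr (m : ℕ) : Equiv.Perm (ZMod m × ZMod m) where
  toFun p := (-p.2, p.1)
  invFun p := (p.2, -p.1)
  left_inv := by rintro ⟨a, b⟩; simp
  right_inv := by rintro ⟨a, b⟩; simp

/-- Dehn twist action `f_c(α, β) = (−β, α − c − 1)`. -/
def ff (m : ℕ) (c : ZMod m) : Equiv.Perm (ZMod m × ZMod m) where
  toFun p := (-p.2, p.1 - c - 1)
  invFun p := (p.2 + c + 1, -p.1)
  left_inv := by rintro ⟨a, b⟩; simp [Prod.ext_iff]; ring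
  right_inv := by rintro ⟨a, b⟩; simp [Prod.ext_iff]; ring

namespace AddSubgroup

variable {A : Type*} [AddCommGroup A]

lemma closure_pair_add_zsmul_le (a b : A) (n : ℤ) : closure {a + n • b, b} ≤ closure {a, b} :=
  (closure_le _).2 <| Set.insert_subset_iff.2
    ⟨add_mem (subset_closure (by simp)) (zsmul_mem (subset_closure (by simp)) n),
      Set.singleton_subset_iff.2 (subset_closure (by simp))⟩

lemma closure_pair_add_zsmul (a b : A) (n : ℤ) : closure {a + n • b, b} = closure {a, b} := by
  refine le_antisymm (closure_pair_add_zsmul_le a b n) ?_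
  simpa using closure_pair_add_zsmul_le (a + n • b) b (-n)

lemma closure_pair_neg_swap (a b : A) : closure {-b, a} = closure {a, b} := by
  rw [Set.pair_comm, Set.insert_eq a, Set.insert_eq a, closure_union, closure_union,
    closure_singleton_neg]

lemma closure_pair_zero (a : A) : closure {a, 0} = closure {a} := by
  rw [Set.pair_comm, closure_insert_zero]

end AddSubgroup

section

variable {m : ℕ}

@[simp] lemma rr_apply (p : ZMod m × ZMod m) : rr m p = (-p.2, p.1) := rfl

@[simp] lemma ff_apply (c : ZMod m) (p : ZMod m × ZMod m) : ff m c p = (-p.2, p.1 - c - 1) := rfl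

lemma e1_zpow_apply (n : ℤ) (p : ZMod m × ZMod m) : (e1 m ^ n) p = (p.1 + n • p.2, p.2) := by
  induction n using Int.induction_on generalizing p with
  | zero => simp
  | succ n ih =>
    rw [zpow_add_one, Equiv.Perm.mul_apply, ih]
    simp only [e1, Equiv.coe_fn_mk, add_smul, one_smul, Prod.mk.injEq, and_true]
    abel
  | pred n ih =>
    rw [zpow_sub_one, Equiv.Perm.mul_apply, ih]
    simp only [e1, Equiv.Perm.inv_def, Equiv.symm_mk, Equiv.coe_fn_mk, sub_smul, one_smul,
      Prod.mk.injEq, and_true]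
    abel

lemma exists_euclid_reduction_intCast (a b : ℤ) :
    ∃ σ ∈ Subgroup.closure {e1 m, rr m}, ∃ d : ZMod m, σ (a, b) = (d, 0) ∧
      AddSubgroup.closure {d} = AddSubgroup.closure {(a : ZMod m), (b : ZMod m)} := by
  -- Lifting to `ℤ` gives Euclid's algorithm the measure `|b|` uniformly in `m`, including `m = 0`.
  induction h : b.natAbs using Nat.strong_induction_on generalizing a b with
  | _ n ih =>
    obtain rfl | hb := eq_or_ne b 0
    · exact ⟨1, one_mem _, a, by simp, by simp [AddSubgroup.closure_pair_zero]⟩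
    have hlt : (a % b).natAbs < n := by
      have := Int.emod_nonneg a hb
      have := Int.emod_lt a hb
      omega
    obtain ⟨σ, hσ, d, hσd, hd⟩ := ih _ hlt (-b) (a % b) rfl
    have hmod : (a : ZMod m) + (-(a / b)) • (b : ZMod m) = ((a % b : ℤ) : ZMod m) := by
      rw [Int.emod_def, zsmul_eq_mul]
      push_cast
      ring
    refine ⟨σ * rr m * e1 m ^ (-(a / b)), ?_, d, ?_, ?_⟩
    · exact mul_mem (mul_mem hσ (Subgroup.subset_closure (by simp)))
        (zpow_mem (Subgroup.subset_closure (by simp)) _)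
    · rw [Equiv.Perm.mul_apply, Equiv.Perm.mul_apply, e1_zpow_apply, hmod, rr_apply, ← hσd,
        Int.cast_neg]
    · rw [hd, Int.cast_neg, AddSubgroup.closure_pair_neg_swap, ← hmod,
        AddSubgroup.closure_pair_add_zsmul]

lemma exists_euclid_reduction (α β : ZMod m) :
    ∃ σ ∈ Subgroup.closure {e1 m, rr m}, ∃ d : ZMod m, σ (α, β) = (d, 0) ∧
      AddSubgroup.closure {d} = AddSubgroup.closure {α, β} := by
  simpa only [ZMod.intCast_zmod_cast] using exists_euclid_reduction_intCast (m := m) α.cast β.cast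

lemma exists_normal_form_of_finite {C : Set (ZMod m)} (hC : C.Finite) (α β : ZMod m) :
    ∃ σ ∈ Subgroup.closure ({e1 m, rr m} ∪ ff m '' C), ∃ d : ZMod m, σ (α, β) = (d, 0) ∧
      AddSubgroup.closure {d} = AddSubgroup.closure ({α, β} ∪ (· + 1) '' C) := by
  induction C, hC using Set.Finite.induction_on generalizing α β with
  | empty =>
    simpa using exists_euclid_reduction α β
  | @insert c C _ _ ih =>
    obtain ⟨σ₁, hσ₁, d₁, hσ₁d, hd₁⟩ := exists_euclid_reduction α β
    obtain ⟨σ₂, hσ₂, d₂, hσ₂d, hd₂⟩ := ih (-d₁) (-c - 1)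
    have hclosure : AddSubgroup.closure {-d₁, -c - 1} =
        AddSubgroup.closure {α, β} ⊔ AddSubgroup.closure {c + 1} := by
      rw [← neg_add', AddSubgroup.closure_pair_neg_swap, Set.insert_eq, AddSubgroup.closure_union,
        AddSubgroup.closure_singleton_neg, hd₁, sup_comm]
    refine ⟨σ₂ * ff m c * rr m * σ₁, ?_, d₂, ?_, ?_⟩
    · have hmono : {e1 m, rr m} ∪ ff m '' C ⊆ {e1 m, rr m} ∪ ff m '' insert c C :=
        Set.union_subset_union_right _ (Set.image_mono (Set.subset_insert c C))
      refine mul_mem (mul_mem (mul_mem (Subgroup.closure_mono hmono hσ₂) ?_) ?_)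
        (Subgroup.closure_mono Set.subset_union_left hσ₁)
      · exact Subgroup.subset_closure (Or.inr (Set.mem_image_of_mem _ (Set.mem_insert c C)))
      · exact Subgroup.subset_closure (Or.inl (by simp))
    · simp only [Equiv.Perm.mul_apply, hσ₁d, rr_apply, ff_apply, neg_zero, zero_sub, hσ₂d]
    · rw [hd₂, Set.image_insert_eq, Set.insert_eq (c + 1)]
      simp only [AddSubgroup.closure_union, hclosure, sup_assoc]

end

theorem genus_one_normal_form_general (m : ℕ) (k : ℕ) (γ : Fin k → ZMod m)
    (α β : ZMod m) :
    ∃ σ ∈ Subgroup.closure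
      (({e1 m, e2 m, nn m, rr m} ∪ Set.range fun i => ff m (γ i)) :
        Set (Equiv.Perm (ZMod m × ZMod m))),
      ∃ d : ZMod m, σ (α, β) = (d, 0) ∧
        AddSubgroup.closure ({d} : Set (ZMod m))
          = AddSubgroup.closure (({α, β} ∪ Set.range fun i => γ i + 1) : Set (ZMod m)) := by
  obtain ⟨σ, hσ, d, hσd, hd⟩ := exists_normal_form_of_finite (Set.finite_range γ) α β
  refine ⟨σ, Subgroup.closure_mono ?_ hσ, d, hσd, ?_⟩
  · rw [← Set.range_comp]
    exact Set.union_subset_union_left _ (by simp [Set.insert_subset_iff])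
  · rw [hd, ← Set.range_comp]
    rfl

/-- The algebraic core of Lemma 5.5: using the genus-1 Dehn twist transformations
`e₁, e₂, n, r` and `f_{γ i}`, any pair `(α, β)` can be transformed into `(d, 0)` where
`d` generates the same additive subgroup of `ℤ/mℤ` as `{α, β} ∪ {γ i + 1}`
(i.e. `d = gcd(m, α, β, γ 0 + 1, …, γ (k-1) + 1)`). -/
theorem genus_one_normal_form (m : ℕ) (hm : 1 ≤ m) (k : ℕ) (γ : Fin k → ZMod m)
    (α β : ZMod m) :
    ∃ σ ∈ Subgroup.closure
      (({e1 m, e2 m, nn m, rr m} ∪ Set.range fun i => ff m (γ i)) :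
        Set (Equiv.Perm (ZMod m × ZMod m))),
      ∃ d : ZMod m, σ (α, β) = (d, 0) ∧
        AddSubgroup.closure ({d} : Set (ZMod m))
          = AddSubgroup.closure (({α, β} ∪ Set.range fun i => γ i + 1) : Set (ZMod m)) :=
  genus_one_normal_form_general m k γ α β
end
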